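/- arXiv:1604.01119 — 12 statements merged into one kernel-verified Lean document; each statement's English description precedes it below -/
import Mathlib

section
/- Let G be a group and let 𝒢 be a power group of G with identity element E. If E is the carrier of a subgroup of G (i.e. 1 ∈ E, E is closed under multiplication and inverses), then inverses in 𝒢 contain pointwise inverses: for all A, B ∈ 𝒢 with A * B = E and B * A = E, and for every x ∈ A, one has x⁻¹ ∈ B. -/
open Pointwise

/-- A power group of `G`: a family `𝒢` of nonempty subsets of `G`, closed under the
pointwise product, with identity `E` and two-sided inverses. -/
def IsPowerGroup {G : Type*} [Group G] (𝒢 : Set (Set G)) (E : Set G) : Prop :=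
  (∀ A ∈ 𝒢, A.Nonempty) ∧
  (∀ A ∈ 𝒢, ∀ B ∈ 𝒢, A * B ∈ 𝒢) ∧
  E ∈ 𝒢 ∧
  (∀ A ∈ 𝒢, E * A = A ∧ A * E = A) ∧
  (∀ A ∈ 𝒢, ∃ B ∈ 𝒢, A * B = E ∧ B * A = E)

theorem stmt_1 {G : Type*} [Group G] (𝒢 : Set (Set G)) (E : Set G)
    (hPG : IsPowerGroup 𝒢 E)
    (hone : (1 : G) ∈ E) (hmul : ∀ a ∈ E, ∀ b ∈ E, a * b ∈ E)
    (hinv : ∀ a ∈ E, a⁻¹ ∈ E) :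
    ∀ A ∈ 𝒢, ∀ B ∈ 𝒢, A * B = E → B * A = E → ∀ x ∈ A, x⁻¹ ∈ B := by
  obtain ⟨hne, hcl, hE, hid, hinvG⟩ := hPG
  intro A hA B hB hAB hBA x hx
  obtain ⟨b, hb⟩ := hne B hB
  have he : x * b ∈ E := by rw [← hAB]; exact Set.mul_mem_mul hx hb
  have he' : (x * b)⁻¹ ∈ E := hinv _ he
  have : b * (x * b)⁻¹ ∈ B * E := Set.mul_mem_mul hb he'
  rw [(hid B hB).2] at this
  simpa [mul_assoc] using this
end

section
/- Let G be a group and let 𝒢 be a power group of G with identity element E. Assume that for all A, B ∈ 𝒢 with A * B = E and B * A = E, every x ∈ A satisfies x⁻¹ ∈ B. Then the union H = ⋃_{A ∈ 𝒢} A is (the carrier of) a subgroup of G, and the members of 𝒢 are pairwise disjoint: for all A, B ∈ 𝒢, if A ∩ B is nonempty then A = B. -/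
open Pointwise

theorem stmt_2 {G : Type*} [Group G] (𝒢 : Set (Set G)) (E : Set G)
    (hPG : IsPowerGroup 𝒢 E)
    (hinv : ∀ A ∈ 𝒢, ∀ B ∈ 𝒢, A * B = E → B * A = E → ∀ x ∈ A, x⁻¹ ∈ B) :
    (∃ H : Subgroup G, (H : Set G) = ⋃ A ∈ 𝒢, A) ∧
      (∀ A ∈ 𝒢, ∀ B ∈ 𝒢, (A ∩ B).Nonempty → A = B) := by
  obtain ⟨hne, hmul, hE, hid, hinvex⟩ := hPG
  -- 1 ∈ E
  have h1E : (1 : G) ∈ E := by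
    obtain ⟨E', hE', hEE', hE'E⟩ := hinvex E hE
    obtain ⟨x, hx⟩ := hne E hE
    have hxinv : x⁻¹ ∈ E' := hinv E hE E' hE' hEE' hE'E x hx
    have : x * x⁻¹ ∈ E * E' := Set.mul_mem_mul hx hxinv
    simpa [hEE'] using this
  -- any member of 𝒢 containing 1 equals E
  have hone : ∀ C ∈ 𝒢, (1 : G) ∈ C → C = E := by
    intro C hC h1
    obtain ⟨C', hC', hCC', hC'C⟩ := hinvex C hC
    have h1' : (1 : G) ∈ C' := by
      simpa using hinv C hC C' hC' hCC' hC'C 1 h1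
    have hCsub : C ⊆ E := by
      intro c hc
      have : c * 1 ∈ C * C' := Set.mul_mem_mul hc h1'
      simpa [hCC'] using this
    have hC'sub : C' ⊆ E := by
      intro c' hc'
      have : c' * 1 ∈ C' * C := Set.mul_mem_mul hc' h1
      simpa [hC'C] using this
    have hEsub : E ⊆ C := by
      rw [← hCC']
      calc C * C' ⊆ C * E := Set.mul_subset_mul_left hC'sub
        _ = C := (hid C hC).2
    exact le_antisymm hCsub hEsub
  have hdisj : ∀ A ∈ 𝒢, ∀ B ∈ 𝒢, (A ∩ B).Nonempty → A = B := by
    rintro A hA B hB ⟨x, hxA, hxB⟩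
    obtain ⟨A', hA', hAA', hA'A⟩ := hinvex A hA
    have hxinv : x⁻¹ ∈ A' := hinv A hA A' hA' hAA' hA'A x hxA
    have hBA' : B * A' ∈ 𝒢 := hmul B hB A' hA'
    have h1 : (1 : G) ∈ B * A' := by
      have := Set.mul_mem_mul hxB hxinv
      simpa using this
    have hBAE : B * A' = E := hone _ hBA' h1
    have key : B * A' * A = A := by rw [hBAE]; exact (hid A hA).1
    rw [mul_assoc, hA'A, (hid B hB).2] at key
    exact key.symm
  refine ⟨⟨{ carrier := ⋃ A ∈ 𝒢, A
             mul_mem' := ?_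
             one_mem' := ?_
             inv_mem' := ?_ }, rfl⟩, hdisj⟩
  · intro a b ha hb
    simp only [Set.mem_iUnion] at ha hb ⊢
    obtain ⟨A, hA, haA⟩ := ha
    obtain ⟨B, hB, hbB⟩ := hb
    exact ⟨A * B, hmul A hA B hB, Set.mul_mem_mul haA hbB⟩
  · simp only [Set.mem_iUnion]
    exact ⟨E, hE, h1E⟩
  · intro a ha
    simp only [Set.mem_iUnion] at ha ⊢
    obtain ⟨A, hA, haA⟩ := ha
    obtain ⟨A', hA', hAA', hA'A⟩ := hinvex A hA
    exact ⟨A', hA', hinv A hA A' hA' hAA' hA'A a haA⟩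
end

section
/- Let G be a group and let 𝒢 be a power group of G with identity element E. Assume the union H = ⋃_{A ∈ 𝒢} A is the carrier of a subgroup of G and that the members of 𝒢 are pairwise disjoint (for all A, B ∈ 𝒢, if A ∩ B is nonempty then A = B). Then E is the carrier of a subgroup of G contained in H, E is normal in H (x * E * x⁻¹ = E for every x ∈ H), and 𝒢 is exactly the family of left cosets of E in H: 𝒢 = {x • E | x ∈ H}. -/
open Pointwise

theorem stmt_3 {G : Type*} [Group G] (𝒢 : Set (Set G)) (E : Set G)
    (hPG : IsPowerGroup 𝒢 E) (H : Subgroup G)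
    (hH : (H : Set G) = ⋃ A ∈ 𝒢, A)
    (hdisj : ∀ A ∈ 𝒢, ∀ B ∈ 𝒢, (A ∩ B).Nonempty → A = B) :
    (∃ K : Subgroup G, (K : Set G) = E) ∧ E ⊆ (H : Set G) ∧
      (∀ x ∈ (H : Set G), x • E * {x⁻¹} = E) ∧
      𝒢 = {S : Set G | ∃ x ∈ (H : Set G), x • E = S} := by
  obtain ⟨hne, hmulG, hEmem, hid, hinv⟩ := hPG
  have hHmem : ∀ A ∈ 𝒢, ∀ x ∈ A, x ∈ H := by
    intro A hA x hx
    rw [← SetLike.mem_coe, hH]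
    exact Set.mem_biUnion hA hx
  have hmem_union : ∀ x : G, x ∈ H → ∃ A ∈ 𝒢, x ∈ A := by
    intro x hx
    rw [← SetLike.mem_coe, hH] at hx
    simpa using hx
  have hmulE : ∀ a ∈ E, ∀ b ∈ E, a * b ∈ E := by
    intro a ha b hb
    have := Set.mul_mem_mul ha hb
    rwa [(hid E hEmem).1] at this
  have hinvE : ∀ a ∈ E, a⁻¹ ∈ E := by
    intro a ha
    have haH : a ∈ H := hHmem E hEmem a ha
    obtain ⟨A, hA, hiA⟩ := hmem_union a⁻¹ (H.inv_mem haH)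
    have h1A : (1 : G) ∈ A := by
      have := Set.mul_mem_mul ha hiA
      rw [(hid A hA).1] at this
      simpa using this
    have haA : a ∈ A := by
      have := Set.mul_mem_mul ha h1A
      rw [(hid A hA).1] at this
      simpa using this
    have : E = A := hdisj E hEmem A hA ⟨a, ha, haA⟩
    rwa [this]
  obtain ⟨e₀, he₀⟩ := hne E hEmem
  have h1E : (1 : G) ∈ E := by
    have := hmulE e₀ he₀ e₀⁻¹ (hinvE e₀ he₀)
    simpa using this
  -- every A ∈ 𝒢 is a left and right coset of E
  have hcoset : ∀ A ∈ 𝒢, ∀ x ∈ A, A = x • E := by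
    intro A hA x hx
    obtain ⟨B, hB, hAB, hBA⟩ := hinv A hA
    obtain ⟨b, hb⟩ := hne B hB
    have hbx : b * x ∈ E := by rw [← hBA]; exact Set.mul_mem_mul hb hx
    apply Set.Subset.antisymm
    · intro a ha
      have hba : b * a ∈ E := by rw [← hBA]; exact Set.mul_mem_mul hb ha
      refine ⟨(b * x)⁻¹ * (b * a), hmulE _ (hinvE _ hbx) _ hba, ?_⟩
      simp only [smul_eq_mul]
      group
    · rintro _ ⟨y, hy, rfl⟩
      have := Set.mul_mem_mul hx hy
      rw [(hid A hA).2] at this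
      simpa using this
  have hcosetR : ∀ A ∈ 𝒢, ∀ x ∈ A, A = E * {x} := by
    intro A hA x hx
    obtain ⟨B, hB, hAB, hBA⟩ := hinv A hA
    obtain ⟨b, hb⟩ := hne B hB
    have hxb : x * b ∈ E := by rw [← hAB]; exact Set.mul_mem_mul hx hb
    apply Set.Subset.antisymm
    · intro a ha
      have hab : a * b ∈ E := by rw [← hAB]; exact Set.mul_mem_mul ha hb
      refine ⟨(a * b) * (x * b)⁻¹, hmulE _ hab _ (hinvE _ hxb), x, rfl, ?_⟩
      group
    · rintro _ ⟨y, hy, z, rfl, rfl⟩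
      have := Set.mul_mem_mul hy hx
      rwa [(hid A hA).1] at this
  refine ⟨⟨⟨⟨⟨E, fun ha hb => hmulE _ ha _ hb⟩, h1E⟩, fun ha => hinvE _ ha⟩, rfl⟩,
    ?_, ?_, ?_⟩
  · intro x hx
    exact hHmem E hEmem x hx
  · intro x hx
    obtain ⟨A, hA, hxA⟩ := hmem_union x hx
    have h1 : x • E = A := (hcoset A hA x hxA).symm
    have h2 : A = E * {x} := hcosetR A hA x hxA
    rw [h1, h2, mul_assoc, Set.singleton_mul_singleton, mul_inv_cancel]
    simp
  · ext S
    constructor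
    · intro hS
      obtain ⟨x, hx⟩ := hne S hS
      exact ⟨x, hHmem S hS x hx, (hcoset S hS x hx).symm⟩
    · rintro ⟨x, hx, rfl⟩
      obtain ⟨A, hA, hxA⟩ := hmem_union x hx
      rw [← hcoset A hA x hxA]
      exact hA
end

section
/- Let G be a group in which every element has finite order, and let 𝒢 be a power group of G with identity element E. Then E is the carrier of a subgroup of G: 1 ∈ E, E is closed under multiplication, and E is closed under inverses. -/
open Pointwise

theorem stmt_4 {G : Type*} [Group G]
    (htor : ∀ a : G, ∃ n : ℕ, 0 < n ∧ a ^ n = 1)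
    (𝒢 : Set (Set G)) (E : Set G) (hPG : IsPowerGroup 𝒢 E) :
    (1 : G) ∈ E ∧ (∀ a ∈ E, ∀ b ∈ E, a * b ∈ E) ∧ (∀ a ∈ E, a⁻¹ ∈ E) := by
  obtain ⟨hne, hmul, hE, hid, hinv⟩ := hPG
  have hEE : E * E = E := (hid E hE).1
  have hclosed : ∀ a ∈ E, ∀ b ∈ E, a * b ∈ E := by
    intro a ha b hb
    rw [← hEE]; exact Set.mul_mem_mul ha hb
  have hpow : ∀ a ∈ E, ∀ n : ℕ, 0 < n → a ^ n ∈ E := by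
    intro a ha n hn
    induction n with
    | zero => omega
    | succ k ih =>
      rcases Nat.eq_zero_or_pos k with hk | hk
      · subst hk; simpa using ha
      · rw [pow_succ]; exact hclosed _ (ih hk) _ ha
  obtain ⟨a, ha⟩ := hne E hE
  obtain ⟨n, hn, han⟩ := htor a
  have h1 : (1 : G) ∈ E := han ▸ hpow a ha n hn
  refine ⟨h1, hclosed, ?_⟩
  intro b hb
  obtain ⟨m, hm, hbm⟩ := htor b
  have h2m : b ^ (2 * m) = 1 := by rw [mul_comm, pow_mul, hbm, one_pow]
  have h' : b * b ^ (2 * m - 1) = 1 := by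
    rw [← pow_succ']
    have : 2 * m - 1 + 1 = 2 * m := by omega
    rw [this, h2m]
  have hinvb : b⁻¹ = b ^ (2 * m - 1) := inv_eq_of_mul_eq_one_right h'
  rw [hinvb]
  exact hpow b hb _ (by omega)
end

section
/- Let G be a group in which every element has finite order. Then every power group 𝒢 of G is a subquotient of G: there exist a subgroup H of G and a subgroup N of G with N ≤ H, normal in H (h * n * h⁻¹ ∈ N for all h ∈ H, n ∈ N), such that 𝒢 = {x • N | x ∈ H}. -/
open Pointwise

theorem stmt_5 {G : Type*} [Group G]
    (htor : ∀ a : G, ∃ n : ℕ, 0 < n ∧ a ^ n = 1)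
    (𝒢 : Set (Set G)) (E : Set G) (hPG : IsPowerGroup 𝒢 E) :
    ∃ H N : Subgroup G, (N : Set G) ⊆ (H : Set G) ∧
      (∀ h ∈ H, ∀ n ∈ N, h * n * h⁻¹ ∈ N) ∧
      𝒢 = {S : Set G | ∃ x ∈ (H : Set G), x • (N : Set G) = S} := by
  classical
  obtain ⟨hne, hmul, hEmem, hid, hinv⟩ := hPG
  have hEE : E * E = E := (hid E hEmem).1
  have hEmul : ∀ x ∈ E, ∀ y ∈ E, x * y ∈ E := by
    intro x hx y hy
    have h := Set.mul_mem_mul hx hy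
    rwa [hEE] at h
  have hpow : ∀ x ∈ E, ∀ k : ℕ, 0 < k → x ^ k ∈ E := by
    intro x hx k hk
    induction k with
    | zero => omega
    | succ n ih =>
      rcases Nat.eq_zero_or_pos n with h0 | hpos
      · simpa [h0] using hx
      · have h := hEmul _ (ih hpos) _ hx
        simpa [pow_succ] using h
  have honeE : (1 : G) ∈ E := by
    obtain ⟨e, he⟩ := hne E hEmem
    obtain ⟨n, hn, hen⟩ := htor e
    have h := hpow e he n hn
    rwa [hen] at h
  have hinvE : ∀ x ∈ E, x⁻¹ ∈ E := by
    intro x hx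
    obtain ⟨n, hn, hxn⟩ := htor x
    rcases Nat.lt_or_ge n 2 with h2 | h2
    · interval_cases n
      · simp at hxn
        simpa [hxn] using honeE
    · have hx1 : x ^ (n - 1) ∈ E := hpow x hx (n - 1) (by omega)
      have hmul1 : x * x ^ (n - 1) = 1 := by
        rw [← pow_succ']
        have : n - 1 + 1 = n := by omega
        rw [this, hxn]
      rw [inv_eq_of_mul_eq_one_right hmul1]
      exact hx1
  -- key: for A ∈ 𝒢, a a' ∈ A, a⁻¹ * a' ∈ E and a' * a⁻¹ ∈ E
  have key : ∀ A ∈ 𝒢, ∀ a ∈ A, ∀ a' ∈ A, a⁻¹ * a' ∈ E ∧ a' * a⁻¹ ∈ E := by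
    intro A hA a ha a' ha'
    obtain ⟨B, hB, hAB, hBA⟩ := hinv A hA
    obtain ⟨b, hb⟩ := hne B hB
    have hba : b * a ∈ E := by rw [← hBA]; exact Set.mul_mem_mul hb ha
    have hba' : b * a' ∈ E := by rw [← hBA]; exact Set.mul_mem_mul hb ha'
    have hab : a * b ∈ E := by rw [← hAB]; exact Set.mul_mem_mul ha hb
    have ha'b : a' * b ∈ E := by rw [← hAB]; exact Set.mul_mem_mul ha' hb
    constructor
    · have h := hEmul _ (hinvE _ hba) _ hba'
      simpa [mul_assoc] using h
    · have h := hEmul _ ha'b _ (hinvE _ hab)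
      have : a' * b * (a * b)⁻¹ = a' * a⁻¹ := by group
      rwa [this] at h
  have hcoset : ∀ A ∈ 𝒢, ∀ a ∈ A, a • E = A := by
    intro A hA a ha
    ext y
    constructor
    · rintro ⟨e, he, rfl⟩
      have : a * e ∈ A * E := Set.mul_mem_mul ha he
      rwa [(hid A hA).2] at this
    · intro hy
      refine ⟨a⁻¹ * y, (key A hA a ha y hy).1, by simp⟩
  let N : Subgroup G :=
    { carrier := E
      mul_mem' := fun hx hy => hEmul _ hx _ hy
      one_mem' := honeE
      inv_mem' := fun hx => hinvE _ hx }
  let H : Subgroup G :=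
    { carrier := {x | ∃ A ∈ 𝒢, x ∈ A}
      mul_mem' := by
        rintro x y ⟨A, hA, hx⟩ ⟨B, hB, hy⟩
        exact ⟨A * B, hmul A hA B hB, Set.mul_mem_mul hx hy⟩
      one_mem' := ⟨E, hEmem, honeE⟩
      inv_mem' := by
        rintro x ⟨A, hA, hx⟩
        obtain ⟨B, hB, hAB, hBA⟩ := hinv A hA
        obtain ⟨b, hb⟩ := hne B hB
        have hbx : b * x ∈ E := by rw [← hBA]; exact Set.mul_mem_mul hb hx
        have : (b * x)⁻¹ * b ∈ E * B := Set.mul_mem_mul (hinvE _ hbx) hb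
        rw [(hid B hB).1] at this
        have hx' : (b * x)⁻¹ * b = x⁻¹ := by group
        rw [hx'] at this
        exact ⟨B, hB, this⟩ }
  refine ⟨H, N, ?_, ?_, ?_⟩
  · intro x hx
    exact ⟨E, hEmem, hx⟩
  · rintro h ⟨A, hA, hhA⟩ n hn
    have hhn : h * n ∈ A := by
      have : h * n ∈ A * E := Set.mul_mem_mul hhA hn
      rwa [(hid A hA).2] at this
    exact (key A hA h hhA (h * n) hhn).2
  · ext A
    constructor
    · intro hA
      obtain ⟨a, ha⟩ := hne A hA
      exact ⟨a, ⟨A, hA, ha⟩, hcoset A hA a ha⟩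
    · rintro ⟨x, ⟨A', hA', hx⟩, rfl⟩
      show x • E ∈ 𝒢
      rw [hcoset A' hA' x hx]
      exact hA'
end

section
/- Let G be a group and let a ∈ G be an element of infinite order. Let E = {a^n | n : ℕ} (including a^0 = 1). Then E * E = E, so the singleton family {E} is a power group of G whose identity element is E; however, E is not the carrier of any subgroup of G, since a ∈ E but a⁻¹ ∉ E. In particular, {E} is a power group of G that is not a subquotient of G. -/
open Pointwise

theorem stmt_6 {G : Type*} [Group G] (a : G)
    (ha : ∀ n : ℕ, 0 < n → a ^ n ≠ 1) :
    let E : Set G := {x | ∃ n : ℕ, x = a ^ n}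
    E * E = E ∧ IsPowerGroup {E} E ∧ a ∈ E ∧ a⁻¹ ∉ E ∧
      ¬ ∃ H N : Subgroup G, (N : Set G) ⊆ (H : Set G) ∧
          (∀ h ∈ H, ∀ n ∈ N, h * n * h⁻¹ ∈ N) ∧
          ({E} : Set (Set G)) = {S : Set G | ∃ x ∈ (H : Set G), x • (N : Set G) = S} := by
  intro E
  have hone : (1 : G) ∈ E := ⟨0, by simp⟩
  have haE : a ∈ E := ⟨1, by simp⟩
  have hEE : E * E = E := by
    ext x
    constructor
    · rintro ⟨y, ⟨m, rfl⟩, z, ⟨n, rfl⟩, rfl⟩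
      exact ⟨m + n, (pow_add a m n).symm⟩
    · intro hx
      exact ⟨x, hx, 1, hone, mul_one x⟩
  have hainv : a⁻¹ ∉ E := by
    rintro ⟨n, hn⟩
    exact ha (n + 1) (Nat.succ_pos n)
      (by rw [pow_succ, ← hn, inv_mul_cancel])
  refine ⟨hEE, ⟨?_, ?_, rfl, ?_, ?_⟩, haE, hainv, ?_⟩
  · rintro A rfl; exact ⟨1, hone⟩
  · rintro A rfl B rfl; simp [hEE]
  · rintro A rfl; exact ⟨hEE, hEE⟩
  · rintro A rfl; exact ⟨E, rfl, hEE, hEE⟩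
  · rintro ⟨H, N, _, _, hset⟩
    have hEmem : E ∈ {S : Set G | ∃ x ∈ (H : Set G), x • (N : Set G) = S} := by
      rw [← hset]; rfl
    obtain ⟨x, _, hx⟩ := hEmem
    -- 1 ∈ E = x • N, so x⁻¹ ∈ N
    have h1 : (1 : G) ∈ x • (N : Set G) := hx ▸ hone
    obtain ⟨n, hnN, hn1⟩ := h1
    have hxinv : x⁻¹ ∈ N := by
      simp only [smul_eq_mul] at hn1
      have : n = x⁻¹ := eq_inv_of_mul_eq_one_right hn1
      exact this ▸ hnN
    have hEN : E = (N : Set G) := by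
      rw [← hx]
      ext y
      constructor
      · rintro ⟨m, hmN, rfl⟩
        have := N.mul_mem hxinv hmN
        have h2 : x • m = x * m := rfl
        have : x * m ∈ N := by
          have := N.inv_mem hxinv
          simpa using N.mul_mem this hmN
        simpa [h2]
      · intro hy
        refine ⟨x⁻¹ * y, N.mul_mem hxinv hy, ?_⟩
        simp [smul_eq_mul, mul_assoc]
    apply hainv
    rw [hEN] at haE ⊢
    exact N.inv_mem haE
end

section
/- Let G be a group, let E ⊆ G be nonempty with E * E = E, and let H be a subgroup of G such that a • E = E • a for every a ∈ H. Then the family 𝒢 = {a • E | a ∈ H} is a power group of G: every member is nonempty, 𝒢 is closed under pointwise product, E = 1 • E ∈ 𝒢 is an identity element (E * (a • E) = a • E = (a • E) * E for all a ∈ H), and for every a ∈ H the set a⁻¹ • E is a two-sided inverse of a • E in 𝒢. -/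
open Pointwise

theorem stmt_8 {G : Type*} [Group G] (E : Set G) (hne : E.Nonempty)
    (hE : E * E = E) (H : Subgroup G)
    (hcomm : ∀ a ∈ H, a • E = MulOpposite.op a • E) :
    let 𝒢 : Set (Set G) := {S : Set G | ∃ a ∈ (H : Set G), a • E = S}
    IsPowerGroup 𝒢 E ∧ E = (1 : G) • E ∧
      (∀ a ∈ H, E * (a • E) = a • E ∧ (a • E) * E = a • E) ∧
      (∀ a ∈ H, (a • E) * (a⁻¹ • E) = E ∧ (a⁻¹ • E) * (a • E) = E) := by
  intro 𝒢
  have hone : E = (1 : G) • E := (one_smul G E).symm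
  have key : ∀ a : G, ∀ b ∈ H, (a • E) * (b • E) = (a * b) • E := by
    intro a b hb
    rw [smul_mul_assoc, hcomm b hb, mul_smul_comm, hE, ← hcomm b hb, smul_smul]
  have hEmem : E ∈ 𝒢 := ⟨1, H.one_mem, one_smul G E⟩
  have hid : ∀ a ∈ H, E * (a • E) = a • E ∧ (a • E) * E = a • E := by
    intro a ha
    constructor
    · have := key 1 a ha
      rwa [one_smul, one_mul] at this
    · have := key a 1 H.one_mem
      rwa [one_smul, mul_one] at this
  have hinv : ∀ a ∈ H, (a • E) * (a⁻¹ • E) = E ∧ (a⁻¹ • E) * (a • E) = E := by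
    intro a ha
    constructor
    · rw [key a a⁻¹ (H.inv_mem ha), mul_inv_cancel, one_smul]
    · rw [key a⁻¹ a ha, inv_mul_cancel, one_smul]
  refine ⟨⟨?_, ?_, hEmem, ?_, ?_⟩, hone, hid, hinv⟩
  · rintro A ⟨a, _, rfl⟩
    exact hne.smul_set
  · rintro A ⟨a, ha, rfl⟩ B ⟨b, hb, rfl⟩
    exact ⟨a * b, H.mul_mem ha hb, (key a b hb).symm⟩
  · rintro A ⟨a, ha, rfl⟩
    exact hid a ha
  · rintro A ⟨a, ha, rfl⟩
    exact ⟨a⁻¹ • E, ⟨a⁻¹, H.inv_mem ha, rfl⟩, hinv a ha⟩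
end

section
/- Every power group of the additive group of integers ℤ is a group of cosets: if 𝒢 is a power group of (ℤ, +), then there exist a set E ⊆ ℤ with E + E = E and an additive subgroup H of ℤ such that 𝒢 = {a + E | a ∈ H}, where a + E denotes the translate {a + x | x ∈ E}. -/
open Pointwise

/-- A power group of the additive group `ℤ`: a family `𝒢` of nonempty subsets of `ℤ`,
closed under the pointwise sum, with identity `E` and two-sided inverses. -/
def IsAddPowerGroup (𝒢 : Set (Set ℤ)) (E : Set ℤ) : Prop :=
  (∀ A ∈ 𝒢, A.Nonempty) ∧
  (∀ A ∈ 𝒢, ∀ B ∈ 𝒢, A + B ∈ 𝒢) ∧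
  E ∈ 𝒢 ∧
  (∀ A ∈ 𝒢, E + A = A ∧ A + E = A) ∧
  (∀ A ∈ 𝒢, ∃ B ∈ 𝒢, A + B = E ∧ B + A = E)

private lemma mem_vadd_iff' {a z : ℤ} {S : Set ℤ} : z ∈ a +ᵥ S ↔ -a + z ∈ S := by
  simp [Set.mem_vadd_set_iff_neg_vadd_mem, vadd_eq_add]

private lemma vadd_add_vadd' (a b : ℤ) (S T : Set ℤ) :
    (a +ᵥ S) + (b +ᵥ T) = (a + b) +ᵥ (S + T) := by
  ext z
  simp only [Set.mem_add, mem_vadd_iff']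
  constructor
  · rintro ⟨x, hx, y, hy, rfl⟩
    exact ⟨-a + x, hx, -b + y, hy, by ring⟩
  · rintro ⟨x, hx, y, hy, h⟩
    exact ⟨a + x, by simpa using hx, b + y, by simpa using hy, by omega⟩

/-- positive multiples stay in an additively closed set -/
private lemma mulmem {S : Set ℤ} (hS : ∀ x ∈ S, ∀ y ∈ S, x + y ∈ S)
    {x : ℤ} (hx : x ∈ S) : ∀ n : ℤ, 1 ≤ n → n * x ∈ S := by
  intro n hn
  refine Int.le_induction (motive := fun k _ => k * x ∈ S) (m := 1) ?_ ?_ n hn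
  · simpa using hx
  · intro n hn ih
    have h : (n + 1) * x = n * x + x := by ring
    rw [h]
    exact hS _ ih _ hx

/-- an additively closed subset of ℤ, unbounded in both directions, is a subgroup -/
private lemma unbdd_neg_mem {S : Set ℤ} (hS : ∀ x ∈ S, ∀ y ∈ S, x + y ∈ S)
    {p q : ℤ} (hp : p ∈ S) (hp0 : 0 < p) (hq : q ∈ S) (hq0 : q < 0) :
    (0 : ℤ) ∈ S ∧ ∀ x ∈ S, -x ∈ S := by
  set g : ℤ := p * (-q) with hg
  have hg1 : 1 ≤ g := by nlinarith
  have gmem : ∀ m : ℤ, m * g ∈ S := by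
    intro m
    rcases lt_trichotomy m 0 with hm | hm | hm
    · have h1 : 1 ≤ -m * p := by nlinarith
      have : m * g = (-m * p) * q := by rw [hg]; ring
      rw [this]
      exact mulmem hS hq _ h1
    · subst hm
      have h1 : (0 : ℤ) * g = (-q) * p + p * q := by ring
      rw [h1]
      exact hS _ (mulmem hS hp _ (by omega)) _ (mulmem hS hq _ hp0)
    · have h1 : 1 ≤ m * (-q) := by nlinarith
      have : m * g = (m * (-q)) * p := by rw [hg]; ring
      rw [this]
      exact mulmem hS hp _ h1
  refine ⟨by simpa using gmem 0, fun x hx => ?_⟩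
  have h1 : -x = (2 * g - 1) * x + (-2 * x) * g := by ring
  rw [h1]
  exact hS _ (mulmem hS hx _ (by omega)) _ (gmem _)

private lemma exists_min {A : Set ℤ} (hne : A.Nonempty) (hbd : BddBelow A) :
    ∃ m ∈ A, ∀ x ∈ A, m ≤ x := by
  classical
  obtain ⟨b, hb⟩ := hbd
  obtain ⟨m, hm, hmin⟩ := Int.exists_least_of_bdd (P := fun z => z ∈ A)
    ⟨b, fun z hz => hb hz⟩ hne
  exact ⟨m, hm, hmin⟩

private lemma exists_max {A : Set ℤ} (hne : A.Nonempty) (hbd : BddAbove A) :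
    ∃ m ∈ A, ∀ x ∈ A, x ≤ m := by
  classical
  obtain ⟨b, hb⟩ := hbd
  obtain ⟨m, hm, hmax⟩ := Int.exists_greatest_of_bdd (P := fun z => z ∈ A)
    ⟨b, fun z hz => hb hz⟩ hne
  exact ⟨m, hm, hmax⟩

/-- Key lemma: every member of a power group is a translate of the identity. -/
private lemma key {𝒢 : Set (Set ℤ)} {E : Set ℤ} (hPG : IsAddPowerGroup 𝒢 E) :
    ∀ A ∈ 𝒢, ∃ a : ℤ, a +ᵥ E = A := by
  obtain ⟨hne, hmul, hE, hid, hinv⟩ := hPG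
  have hEE : E + E = E := (hid E hE).1
  have hEcl : ∀ x ∈ E, ∀ y ∈ E, x + y ∈ E := fun x hx y hy =>
    hEE ▸ Set.add_mem_add hx hy
  intro A hA
  obtain ⟨B, hB, hAB, hBA⟩ := hinv A hA
  obtain ⟨a1, ha1⟩ := hne A hA
  obtain ⟨b1, hb1⟩ := hne B hB
  -- the translate direction that always holds: a ∈ A → a +ᵥ E ⊆ A
  have sub1 : ∀ a ∈ A, a +ᵥ E ⊆ A := by
    intro a ha z hz
    rw [mem_vadd_iff'] at hz
    have : a + (-a + z) ∈ A + E := Set.add_mem_add ha hz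
    rw [(hid A hA).2] at this
    simpa using this
  by_cases hbb : BddBelow E
  · -- E has a least element, which must be 0
    obtain ⟨m, hm, hmin⟩ := exists_min (hne E hE) hbb
    have hm0 : m = 0 := by
      have h1 : m ≤ m + m := hmin _ (hEcl m hm m hm)
      have h2 : m ∈ E + E := by rw [hEE]; exact hm
      obtain ⟨x, hx, y, hy, hxy⟩ := Set.mem_add.mp h2
      have := hmin x hx
      have := hmin y hy
      omega
    subst hm0
    -- A and B are bounded below
    have hAbd : BddBelow A := by
      refine ⟨-b1, fun x hx => ?_⟩
      have : x + b1 ∈ E := hAB ▸ Set.add_mem_add hx hb1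
      have := hmin _ this; omega
    have hBbd : BddBelow B := by
      refine ⟨-a1, fun x hx => ?_⟩
      have : a1 + x ∈ E := hAB ▸ Set.add_mem_add ha1 hx
      have := hmin _ this; omega
    obtain ⟨a0, ha0, ha0min⟩ := exists_min (hne A hA) hAbd
    obtain ⟨b0, hb0, hb0min⟩ := exists_min (hne B hB) hBbd
    have hsum : a0 + b0 = 0 := by
      have h1 : a0 + b0 ∈ E := hAB ▸ Set.add_mem_add ha0 hb0
      have h2 : (0 : ℤ) ∈ A + B := by rw [hAB]; exact hm
      obtain ⟨x, hx, y, hy, hxy⟩ := Set.mem_add.mp h2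
      have := ha0min x hx
      have := hb0min y hy
      have := hmin _ h1
      omega
    refine ⟨a0, le_antisymm (sub1 a0 ha0) ?_⟩
    intro x hx
    rw [mem_vadd_iff']
    have : x + b0 ∈ E := hAB ▸ Set.add_mem_add hx hb0
    have hxe : -a0 + x = x + b0 := by omega
    rwa [hxe]
  · by_cases hba : BddAbove E
    · -- symmetric: greatest element is 0
      obtain ⟨m, hm, hmax⟩ := exists_max (hne E hE) hba
      have hm0 : m = 0 := by
        have h1 : m + m ≤ m := hmax _ (hEcl m hm m hm)
        have h2 : m ∈ E + E := by rw [hEE]; exact hm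
        obtain ⟨x, hx, y, hy, hxy⟩ := Set.mem_add.mp h2
        have := hmax x hx
        have := hmax y hy
        omega
      subst hm0
      have hAbd : BddAbove A := by
        refine ⟨-b1, fun x hx => ?_⟩
        have : x + b1 ∈ E := hAB ▸ Set.add_mem_add hx hb1
        have := hmax _ this; omega
      have hBbd : BddAbove B := by
        refine ⟨-a1, fun x hx => ?_⟩
        have : a1 + x ∈ E := hAB ▸ Set.add_mem_add ha1 hx
        have := hmax _ this; omega
      obtain ⟨a0, ha0, ha0max⟩ := exists_max (hne A hA) hAbd
      obtain ⟨b0, hb0, hb0max⟩ := exists_max (hne B hB) hBbd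
      have hsum : a0 + b0 = 0 := by
        have h1 : a0 + b0 ∈ E := hAB ▸ Set.add_mem_add ha0 hb0
        have h2 : (0 : ℤ) ∈ A + B := by rw [hAB]; exact hm
        obtain ⟨x, hx, y, hy, hxy⟩ := Set.mem_add.mp h2
        have := ha0max x hx
        have := hb0max y hy
        have := hmax _ h1
        omega
      refine ⟨a0, le_antisymm (sub1 a0 ha0) ?_⟩
      intro x hx
      rw [mem_vadd_iff']
      have : x + b0 ∈ E := hAB ▸ Set.add_mem_add hx hb0
      have hxe : -a0 + x = x + b0 := by omega
      rwa [hxe]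
    · -- E unbounded in both directions: E is closed under negation
      obtain ⟨p, hp, hp0⟩ := not_bddAbove_iff.mp hba 0
      obtain ⟨q, hq, hq0⟩ := not_bddBelow_iff.mp hbb 0
      obtain ⟨h0E, hnegE⟩ := unbdd_neg_mem hEcl hp hp0 hq hq0
      refine ⟨a1, le_antisymm (sub1 a1 ha1) ?_⟩
      intro x hx
      rw [mem_vadd_iff']
      have h1 : x + b1 ∈ E := hAB ▸ Set.add_mem_add hx hb1
      have h2 : a1 + b1 ∈ E := hAB ▸ Set.add_mem_add ha1 hb1
      have h3 : (x + b1) + (-(a1 + b1)) ∈ E := hEcl _ h1 _ (hnegE _ h2)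
      have hxe : -a1 + x = (x + b1) + (-(a1 + b1)) := by ring
      rwa [hxe]

theorem stmt_10 (𝒢 : Set (Set ℤ)) (E : Set ℤ) (hPG : IsAddPowerGroup 𝒢 E) :
    ∃ (E' : Set ℤ) (H : AddSubgroup ℤ), E' + E' = E' ∧
      𝒢 = {S : Set ℤ | ∃ a ∈ (H : Set ℤ), a +ᵥ E' = S} := by
  obtain ⟨hne, hmul, hE, hid, hinv⟩ := hPG
  have hPG' : IsAddPowerGroup 𝒢 E := ⟨hne, hmul, hE, hid, hinv⟩
  have hEE : E + E = E := (hid E hE).1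
  refine ⟨E, ⟨⟨⟨{a : ℤ | a +ᵥ E ∈ 𝒢}, ?_⟩, ?_⟩, ?_⟩, hEE, ?_⟩
  · -- add_mem
    intro a b ha hb
    have h1 : (a +ᵥ E) + (b +ᵥ E) ∈ 𝒢 := hmul _ ha _ hb
    rwa [vadd_add_vadd', hEE] at h1
  · -- zero_mem
    show (0 : ℤ) +ᵥ E ∈ 𝒢
    simpa using hE
  · -- neg_mem
    intro a ha
    obtain ⟨B, hB, hAB, hBA⟩ := hinv _ ha
    obtain ⟨c, hc⟩ := key hPG' B hB
    have h1 : (a +ᵥ E) + (c +ᵥ E) = E := by rw [hc]; exact hAB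
    rw [vadd_add_vadd', hEE] at h1
    show (-a) +ᵥ E ∈ 𝒢
    have h2 : (-a) +ᵥ E = c +ᵥ E := by
      conv_lhs => rw [← h1]
      rw [vadd_vadd]
      congr 1
      ring
    rw [h2, hc]
    exact hB
  · ext S
    constructor
    · intro hS
      obtain ⟨a, ha⟩ := key hPG' S hS
      refine ⟨a, ?_, ha⟩
      show a +ᵥ E ∈ 𝒢
      rw [ha]; exact hS
    · rintro ⟨a, ha, rfl⟩
      exact ha
end

section
/- Let E ⊆ ℤ satisfy E + E = E (pointwise sum), and suppose E contains both a positive element and a negative element. Then E is the carrier of an additive subgroup of ℤ: 0 ∈ E, E is closed under addition, and E is closed under negation. -/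
open Pointwise

theorem stmt_12 (E : Set ℤ) (hE : E + E = E)
    (hpos : ∃ p ∈ E, 0 < p) (hneg : ∃ n ∈ E, n < 0) :
    (0 : ℤ) ∈ E ∧ (∀ a ∈ E, ∀ b ∈ E, a + b ∈ E) ∧ (∀ a ∈ E, -a ∈ E) := by
  obtain ⟨p, hp, hp0⟩ := hpos
  obtain ⟨n, hn, hn0⟩ := hneg
  have hadd : ∀ a ∈ E, ∀ b ∈ E, a + b ∈ E := by
    intro a ha b hb
    rw [← hE]; exact Set.add_mem_add ha hb
  -- positive multiples stay in E
  have hsmul : ∀ (k : ℕ) (x : ℤ), x ∈ E → ((k : ℤ) + 1) * x ∈ E := by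
    intro k
    induction k with
    | zero => intro x hx; simpa using hx
    | succ k ih =>
      intro x hx
      have h := hadd _ (ih x hx) _ hx
      have : ((k : ℤ) + 1) * x + x = ((↑(k + 1) : ℤ) + 1) * x := by push_cast; ring
      rwa [this] at h
  have h0 : (0 : ℤ) ∈ E := by
    have h1 := hsmul ((-n).toNat - 1) p hp
    have h2 := hsmul (p.toNat - 1) n hn
    have e1 : ((((-n).toNat - 1 : ℕ) : ℤ) + 1) = -n := by omega
    have e2 : (((p.toNat - 1 : ℕ) : ℤ) + 1) = p := by omega
    rw [e1] at h1; rw [e2] at h2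
    have h := hadd _ h1 _ h2
    have : -n * p + p * n = 0 := by ring
    rwa [this] at h
  -- nonnegative multiples stay in E
  have hsmul0 : ∀ (k : ℕ) (x : ℤ), x ∈ E → (k : ℤ) * x ∈ E := by
    intro k x hx
    cases k with
    | zero => simpa using h0
    | succ k =>
      have := hsmul k x hx
      have e : ((k : ℤ) + 1) * x = ((↑(k + 1) : ℤ)) * x := by push_cast; ring
      rwa [e] at this
  refine ⟨h0, hadd, ?_⟩
  -- t = p * (-n) > 0, with t ∈ E and -t ∈ E
  set t : ℤ := p * (-n) with ht
  have ht0 : 0 < t := mul_pos hp0 (by linarith)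
  have htE : t ∈ E := by
    have h1 := hsmul ((-n).toNat - 1) p hp
    have e1 : ((((-n).toNat - 1 : ℕ) : ℤ) + 1) = -n := by omega
    rw [e1] at h1
    have e2 : -n * p = t := by rw [ht]; ring
    rwa [e2] at h1
  have hntE : -t ∈ E := by
    have h1 := hsmul (p.toNat - 1) n hn
    have e1 : (((p.toNat - 1 : ℕ) : ℤ) + 1) = p := by omega
    rw [e1] at h1
    have e2 : p * n = -t := by rw [ht]; ring
    rwa [e2] at h1
  intro a ha
  rcases le_or_gt 0 a with hga | hla
  · have x1 := hsmul0 (t - 1).toNat a ha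
    have x2 := hsmul0 a.toNat (-t) hntE
    have e1 : (((t - 1).toNat : ℕ) : ℤ) = t - 1 := by omega
    have e2 : ((a.toNat : ℕ) : ℤ) = a := by omega
    rw [e1] at x1; rw [e2] at x2
    have h := hadd _ x1 _ x2
    have e3 : (t - 1) * a + a * (-t) = -a := by ring
    rwa [e3] at h
  · have x1 := hsmul0 (t - 1).toNat a ha
    have x2 := hsmul0 (-a).toNat t htE
    have e1 : (((t - 1).toNat : ℕ) : ℤ) = t - 1 := by omega
    have e2 : (((-a).toNat : ℕ) : ℤ) = -a := by omega
    rw [e1] at x1; rw [e2] at x2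
    have h := hadd _ x1 _ x2
    have e3 : (t - 1) * a + -a * t = -a := by ring
    rwa [e3] at h
end

section
/- The family 𝒢 = { {q : ℚ | r < (q : ℝ)} | r : ℝ } of rational open rays is a power group of the additive group ℚ: every member is nonempty, 𝒢 is closed under pointwise sum, the set {q : ℚ | 0 < q} ∈ 𝒢 is an identity element for the pointwise sum on 𝒢, and every member {q : ℚ | r < (q : ℝ)} has the two-sided inverse {q : ℚ | -r < (q : ℝ)} in 𝒢. -/
open Pointwise

lemma ray_add (r s : ℝ) :
    {q : ℚ | r < (q : ℝ)} + {q : ℚ | s < (q : ℝ)} = {q : ℚ | r + s < (q : ℝ)} := by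
  ext q
  constructor
  · rintro ⟨a, ha, b, hb, rfl⟩
    simp only [Set.mem_setOf_eq] at *
    push_cast
    exact add_lt_add ha hb
  · intro hq
    simp only [Set.mem_setOf_eq] at hq
    have h : r < (q : ℝ) - s := by linarith
    obtain ⟨a, ha1, ha2⟩ := exists_rat_btwn h
    refine ⟨a, ha1, q - a, ?_, by ring⟩
    simp only [Set.mem_setOf_eq]
    push_cast
    linarith

lemma zero_ray : {q : ℚ | 0 < q} = {q : ℚ | (0:ℝ) < (q : ℝ)} := by
  ext q; simp [Rat.cast_pos]

theorem stmt_14 :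
    let 𝒢 : Set (Set ℚ) := {S : Set ℚ | ∃ r : ℝ, S = {q : ℚ | r < (q : ℝ)}}
    (∀ A ∈ 𝒢, A.Nonempty) ∧
    (∀ A ∈ 𝒢, ∀ B ∈ 𝒢, A + B ∈ 𝒢) ∧
    {q : ℚ | 0 < q} ∈ 𝒢 ∧
    (∀ A ∈ 𝒢, {q : ℚ | 0 < q} + A = A ∧ A + {q : ℚ | 0 < q} = A) ∧
    (∀ r : ℝ, {q : ℚ | r < (q : ℝ)} + {q : ℚ | -r < (q : ℝ)} = {q : ℚ | 0 < q} ∧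
      {q : ℚ | -r < (q : ℝ)} + {q : ℚ | r < (q : ℝ)} = {q : ℚ | 0 < q}) := by
  intro 𝒢
  refine ⟨?_, ?_, ⟨0, zero_ray⟩, ?_, ?_⟩
  · rintro A ⟨r, rfl⟩
    obtain ⟨a, ha⟩ := exists_rat_gt r
    exact ⟨a, ha⟩
  · rintro A ⟨r, rfl⟩ B ⟨s, rfl⟩
    exact ⟨r + s, ray_add r s⟩
  · rintro A ⟨r, rfl⟩
    rw [zero_ray, ray_add, ray_add, zero_add, add_zero]
    exact ⟨rfl, rfl⟩
  · intro r
    rw [ray_add, ray_add, add_neg_cancel, neg_add_cancel, zero_ray]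
    exact ⟨rfl, rfl⟩
end

section
/- The map from ℝ to Set ℚ sending r to the rational open ray {q : ℚ | r < (q : ℝ)} is injective; consequently the family 𝒢 = { {q : ℚ | r < (q : ℝ)} | r : ℝ } is uncountable, and for every additive subgroup H of ℚ and every additive subgroup N of H there is no bijection between 𝒢 and the quotient H ⧸ N. In particular, 𝒢 is a power group of ℚ that is not isomorphic to any subquotient of ℚ. -/
open Pointwise

theorem stmt_15 :
    Function.Injective (fun r : ℝ => {q : ℚ | r < (q : ℝ)}) ∧
    ¬ ({S : Set ℚ | ∃ r : ℝ, S = {q : ℚ | r < (q : ℝ)}}).Countable ∧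
    ∀ (H : AddSubgroup ℚ) (N : AddSubgroup H),
      IsEmpty ({S : Set ℚ | ∃ r : ℝ, S = {q : ℚ | r < (q : ℝ)}} ≃ H ⧸ N) := by
  have hinj : Function.Injective (fun r : ℝ => {q : ℚ | r < (q : ℝ)}) := by
    intro a b hab
    by_contra hne
    rcases lt_or_gt_of_ne hne with h | h
    · obtain ⟨q, hq1, hq2⟩ := exists_rat_btwn h
      have : q ∈ {q : ℚ | a < (q : ℝ)} := hq1
      simp only at hab
      rw [hab] at this
      exact absurd this (not_lt.mpr hq2.le)
    · obtain ⟨q, hq1, hq2⟩ := exists_rat_btwn h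
      have : q ∈ {q : ℚ | b < (q : ℝ)} := hq1
      simp only at hab
      rw [← hab] at this
      exact absurd this (not_lt.mpr hq2.le)
  have hset : {S : Set ℚ | ∃ r : ℝ, S = {q : ℚ | r < (q : ℝ)}}
      = Set.range (fun r : ℝ => {q : ℚ | r < (q : ℝ)}) := by
    ext S; simp [eq_comm, Set.mem_setOf_eq]
  have hcnt : ¬ ({S : Set ℚ | ∃ r : ℝ, S = {q : ℚ | r < (q : ℝ)}}).Countable := by
    rw [hset]
    intro hc
    have : (Set.univ : Set ℝ).Countable := by
      have := hc.preimage hinj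
      simpa using this
    exact Cardinal.not_countable_real (by simpa using this)
  refine ⟨hinj, hcnt, fun H N => ?_⟩
  constructor
  intro e
  apply hcnt
  have : Countable (H ⧸ N) := Quotient.countable
  have : Countable ({S : Set ℚ | ∃ r : ℝ, S = {q : ℚ | r < (q : ℝ)}}) := .of_equiv _ e.symm
  exact (Set.countable_coe_iff.mp this)
end

section
/- Let G be a group in which every element has finite order, and let 𝒢 be a power group of G with identity element E. Then every member of 𝒢 has finite order in 𝒢: for every A ∈ 𝒢 there exists a positive integer n such that the n-fold pointwise product A * A * ⋯ * A equals E. -/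
open Pointwise

theorem stmt_16 {G : Type*} [Group G]
    (htor : ∀ a : G, ∃ n : ℕ, 0 < n ∧ a ^ n = 1)
    (𝒢 : Set (Set G)) (E : Set G) (hPG : IsPowerGroup 𝒢 E) :
    ∀ A ∈ 𝒢, ∃ n : ℕ, 0 < n ∧ A ^ n = E := by
  obtain ⟨hne, hmul, hE, hid, hinv⟩ := hPG
  -- E * E = E
  have hEE : E * E = E := (hid E hE).1
  -- E ^ k = E for k ≥ 1
  have hEpow : ∀ k : ℕ, 0 < k → E ^ k = E := by
    intro k hk
    induction k with
    | zero => omega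
    | succ m ih =>
      rcases Nat.eq_zero_or_pos m with hm | hm
      · subst hm; simp
      · rw [pow_succ, ih hm, hEE]
  -- 1 ∈ E
  have hone : (1 : G) ∈ E := by
    obtain ⟨e, he⟩ := hne E hE
    obtain ⟨n, hn, hen⟩ := htor e
    have := Set.pow_mem_pow he (n := n)
    rw [hEpow n hn, hen] at this
    exact this
  intro A hA
  obtain ⟨B, hB, hAB, hBA⟩ := hinv A hA
  -- find a ∈ A, b ∈ B with a * b = 1
  have : (1 : G) ∈ A * B := by rw [hAB]; exact hone
  obtain ⟨a, ha, b, hb, hab⟩ := this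
  have hbinv : b = a⁻¹ := eq_inv_of_mul_eq_one_right hab
  subst hbinv
  -- A = a • E
  have hAeq : A = a • E := by
    ext x
    rw [Set.mem_smul_set_iff_inv_smul_mem]
    constructor
    · intro hx
      have : a⁻¹ * x ∈ B * A := Set.mul_mem_mul hb hx
      rwa [hBA] at this
    · intro hx
      have : a * (a⁻¹ * x) ∈ A * E := Set.mul_mem_mul ha hx
      rwa [(hid A hA).2, mul_inv_cancel_left] at this
  obtain ⟨n, hn, han⟩ := htor a
  refine ⟨n, hn, ?_⟩
  -- A ^ k = a ^ k • E for k ≥ 1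
  have key : ∀ k : ℕ, 0 < k → A ^ k = a ^ k • E := by
    intro k hk
    induction k with
    | zero => omega
    | succ m ih =>
      rcases Nat.eq_zero_or_pos m with hm | hm
      · subst hm; simpa using hAeq
      · have hEA : E * A = A := (hid A hA).1
        rw [pow_succ, ih hm, pow_succ]
        calc a ^ m • E * A = a ^ m • (E * A) := by rw [smul_mul_assoc]
          _ = a ^ m • (a • E) := by rw [hEA, hAeq]
          _ = (a ^ m * a) • E := by rw [smul_smul]
  rw [key n hn, han, one_smul]
end
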